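/- arXiv:1302.4587 — 2 statements merged into one kernel-verified Lean document; each statement's English description precedes it below -/
import Mathlib

section
/- Let G be a finite simple graph and w an injective weight function on E(G). Then the output M = ∪_{i≥0} M_i of the iterated local max algorithm is a matching of G: any two distinct edges of M have no common endpoint. -/
/-- Two edges of a graph share an endpoint. -/
def shareEndpoint {V : Type*} (e f : Sym2 V) : Prop := ∃ v, v ∈ e ∧ v ∈ f

/-- An edge `e` of the subgraph with edge set `E` is locally maximal in it:
`e ∈ E` and `w e > w f` for every other edge `f ∈ E` sharing an endpoint with `e`. -/
def locMaxIn {V : Type*} (w : Sym2 V → ℝ) (E : Set (Sym2 V)) (e : Sym2 V) : Prop :=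
  e ∈ E ∧ ∀ f ∈ E, f ≠ e → shareEndpoint e f → w f < w e

/-- One round of the local max algorithm: remove every edge sharing an endpoint with
some locally maximal edge (including the locally maximal edges themselves). -/
def stepSet {V : Type*} (w : Sym2 V → ℝ) (E : Set (Sym2 V)) : Set (Sym2 V) :=
  {f ∈ E | ¬ ∃ e, locMaxIn w E e ∧ shareEndpoint e f}

/-- The edge set of the graph `G_i` after `i` rounds of the local max algorithm. -/
def Eseq {V : Type*} (G : SimpleGraph V) (w : Sym2 V → ℝ) : ℕ → Set (Sym2 V)
  | 0 => G.edgeSet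
  | n + 1 => stepSet w (Eseq G w n)

/-- The set `M_i` of edges matched in round `i`: the locally maximal edges of `G_i`. -/
def Mi {V : Type*} (G : SimpleGraph V) (w : Sym2 V → ℝ) (i : ℕ) : Set (Sym2 V) :=
  {e | locMaxIn w (Eseq G w i) e}

theorem shareEndpoint_comm {V : Type*} {e f : Sym2 V} :
    shareEndpoint e f ↔ shareEndpoint f e :=
  exists_congr fun _ => and_comm

theorem not_shareEndpoint_of_locMaxIn {V : Type*} {w : Sym2 V → ℝ} {E : Set (Sym2 V)}
    {e f : Sym2 V} (he : locMaxIn w E e) (hf : locMaxIn w E f) (hne : e ≠ f) :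
    ¬ shareEndpoint e f := fun hsh =>
  (he.2 f hf.1 hne.symm hsh).asymm (hf.2 e he.1 hne (shareEndpoint_comm.1 hsh))

theorem not_shareEndpoint_of_mem_stepSet {V : Type*} {w : Sym2 V → ℝ} {E : Set (Sym2 V)}
    {e f : Sym2 V} (he : locMaxIn w E e) (hf : f ∈ stepSet w E) :
    ¬ shareEndpoint e f := fun hsh =>
  hf.2 ⟨e, he, hsh⟩

theorem Eseq_antitone {V : Type*} (G : SimpleGraph V) (w : Sym2 V → ℝ) :
    Antitone (Eseq G w) :=
  antitone_nat_of_succ_le fun _ _ hf => hf.1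

theorem not_shareEndpoint_of_mem_Mi_of_lt {V : Type*} {G : SimpleGraph V} {w : Sym2 V → ℝ}
    {i j : ℕ} (hij : i < j) {e f : Sym2 V} (he : e ∈ Mi G w i) (hf : f ∈ Mi G w j) :
    ¬ shareEndpoint e f :=
  not_shareEndpoint_of_mem_stepSet he (Eseq_antitone G w (Nat.succ_le_of_lt hij) hf.1)

theorem stmt8_general {V : Type*} (G : SimpleGraph V) (w : Sym2 V → ℝ) :
    ∀ e ∈ ⋃ i, Mi G w i, ∀ f ∈ ⋃ i, Mi G w i, e ≠ f → ¬ shareEndpoint e f := by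
  simp only [Set.mem_iUnion]
  rintro e ⟨i, he⟩ f ⟨j, hf⟩ hne
  rcases lt_trichotomy i j with hij | rfl | hji
  · exact not_shareEndpoint_of_mem_Mi_of_lt hij he hf
  · exact not_shareEndpoint_of_locMaxIn he hf hne
  · exact shareEndpoint_comm.not.2 (not_shareEndpoint_of_mem_Mi_of_lt hji hf he)

/-- For a finite simple graph `G` and an injective weight function `w`
on its edges, the output `M = ∪_{i≥0} M_i` of the iterated local max algorithm is a
matching: any two distinct edges of `M` have no common endpoint. -/
theorem stmt8 {V : Type*} [Fintype V] (G : SimpleGraph V) (w : Sym2 V → ℝ)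
    (hinj : Set.InjOn w G.edgeSet) :
    ∀ e ∈ ⋃ i, Mi G w i, ∀ f ∈ ⋃ i, Mi G w i, e ≠ f → ¬ shareEndpoint e f :=
  stmt8_general G w
end

section
/- Let G be a finite simple graph with nonnegative edge weights w, and let M ⊆ E(G) be a matching such that every edge e ∈ E(G) \ M shares an endpoint with some edge f ∈ M with w(f) ≥ w(e). Then for every matching M' of G, Σ_{e ∈ M'} w(e) ≤ 2 · Σ_{f ∈ M} w(f). -/
/-! Charge each edge `e ∈ M'` to an edge `f ∈ M` sharing an endpoint with it and at least as
heavy (`e` itself if `e ∈ M`). An edge `f = s(a, b)` is charged only by edges of `M'` through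
`a` or through `b`, and since `M'` is a matching there is at most one of each. -/

open Finset

theorem Finset.sum_le_mul_sum_of_forall_exists_le {α β R : Type*} [Semiring R] [PartialOrder R]
    [IsOrderedRing R] (s : Finset α) (t : Finset β) (r : α → β → Prop) [∀ a b, Decidable (r a b)]
    (f : α → R) (g : β → R) (k : ℕ) (hg : ∀ b ∈ t, 0 ≤ g b)
    (hcharge : ∀ a ∈ s, ∃ b ∈ t, r a b ∧ f a ≤ g b)
    (hdeg : ∀ b ∈ t, #{a ∈ s | r a b} ≤ k) :
    ∑ a ∈ s, f a ≤ k * ∑ b ∈ t, g b := by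
  calc ∑ a ∈ s, f a ≤ ∑ a ∈ s, ∑ b ∈ t with r a b, g b := by
        refine sum_le_sum fun a ha => ?_
        obtain ⟨b, hb, hab, hle⟩ := hcharge a ha
        exact hle.trans <| single_le_sum (fun b hb => hg b (mem_filter.1 hb).1)
          (mem_filter.2 ⟨hb, hab⟩)
    _ = ∑ b ∈ t, #{a ∈ s | r a b} • g b := by
        rw [sum_comm' (t' := t) (s' := fun b => {a ∈ s | r a b}) (by simp only [mem_filter]; tauto)]
        simp only [sum_const]
    _ ≤ ∑ b ∈ t, k • g b := sum_le_sum fun b hb => nsmul_le_nsmul_left (hg b hb) (hdeg b hb)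
    _ = k * ∑ b ∈ t, g b := by rw [← nsmul_eq_mul, sum_nsmul]

section

variable {V : Type*}

theorem shareEndpoint_self (e : Sym2 V) : shareEndpoint e e := by
  induction e using Sym2.ind with
  | _ a b => exact ⟨a, Sym2.mem_mk_left a b, Sym2.mem_mk_left a b⟩

variable [DecidableEq V] {N : Finset (Sym2 V)}
  (hN : ∀ e ∈ N, ∀ f ∈ N, e ≠ f → ¬ shareEndpoint e f)
include hN

theorem card_filter_mem_le_one (v : V) : #{e ∈ N | v ∈ e} ≤ 1 := by
  refine card_le_one.2 fun e he f hf => ?_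
  rw [mem_filter] at he hf
  by_contra hne
  exact hN e he.1 f hf.1 hne ⟨v, he.2, hf.2⟩

theorem card_filter_shareEndpoint_le_two (f : Sym2 V) [DecidablePred (shareEndpoint · f)] :
    #{e ∈ N | shareEndpoint e f} ≤ 2 := by
  obtain ⟨a, b, rfl⟩ : ∃ a b, f = s(a, b) := Sym2.ind (fun a b => ⟨a, b, rfl⟩) f
  have hsub : {e ∈ N | shareEndpoint e s(a, b)} ⊆ {e ∈ N | a ∈ e} ∪ {e ∈ N | b ∈ e} := by
    intro e he
    obtain ⟨heN, v, hve, hvab⟩ := mem_filter.1 he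
    rcases Sym2.mem_iff.1 hvab with rfl | rfl
    · exact mem_union_left _ (mem_filter.2 ⟨heN, hve⟩)
    · exact mem_union_right _ (mem_filter.2 ⟨heN, hve⟩)
  calc #{e ∈ N | shareEndpoint e s(a, b)}
      ≤ #{e ∈ N | a ∈ e} + #{e ∈ N | b ∈ e} := (card_le_card hsub).trans (card_union_le _ _)
    _ ≤ 2 := add_le_add (card_filter_mem_le_one hN a) (card_filter_mem_le_one hN b)

end

theorem stmt12_general {V : Type*} (G : SimpleGraph V) (w : Sym2 V → ℝ)
    (hw : ∀ e ∈ G.edgeSet, 0 ≤ w e)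
    (M : Finset (Sym2 V)) (hM : ↑M ⊆ G.edgeSet)
    (hdom : ∀ e ∈ G.edgeSet, e ∉ M → ∃ f ∈ M, shareEndpoint e f ∧ w e ≤ w f) :
    ∀ M' : Finset (Sym2 V), ↑M' ⊆ G.edgeSet →
      (∀ e ∈ M', ∀ f ∈ M', e ≠ f → ¬ shareEndpoint e f) →
      ∑ e ∈ M', w e ≤ 2 * ∑ f ∈ M, w f := by
  classical
  intro M' hM' hmatch'
  have hcharge : ∀ e ∈ M', ∃ f ∈ M, shareEndpoint e f ∧ w e ≤ w f := fun e he =>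
    if heM : e ∈ M then ⟨e, heM, shareEndpoint_self e, le_rfl⟩ else hdom e (hM' he) heM
  exact_mod_cast sum_le_mul_sum_of_forall_exists_le M' M shareEndpoint w w 2
    (fun f hf => hw f (hM hf)) hcharge
    (fun f _ => card_filter_shareEndpoint_le_two hmatch' f)

/-- Let `G` be a finite simple graph with nonnegative edge weights
`w`, and let `M ⊆ E(G)` be a matching such that every edge `e ∈ E(G) \ M` shares
an endpoint with some edge `f ∈ M` with `w f ≥ w e`. Then for every matching `M'`
of `G`, `Σ_{e ∈ M'} w e ≤ 2 · Σ_{f ∈ M} w f`. -/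
theorem stmt12 {V : Type*} [Fintype V] (G : SimpleGraph V) (w : Sym2 V → ℝ)
    (hw : ∀ e ∈ G.edgeSet, 0 ≤ w e)
    (M : Finset (Sym2 V)) (hM : ↑M ⊆ G.edgeSet)
    (hmatch : ∀ e ∈ M, ∀ f ∈ M, e ≠ f → ¬ shareEndpoint e f)
    (hdom : ∀ e ∈ G.edgeSet, e ∉ M → ∃ f ∈ M, shareEndpoint e f ∧ w e ≤ w f) :
    ∀ M' : Finset (Sym2 V), ↑M' ⊆ G.edgeSet →
      (∀ e ∈ M', ∀ f ∈ M', e ≠ f → ¬ shareEndpoint e f) →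
      ∑ e ∈ M', w e ≤ 2 * ∑ f ∈ M, w f :=
  stmt12_general G w hw M hM hdom
end
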